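/- There exists a function insert from budzippers, nonempty keys, and values to optional budzippers such that for every budzipper z = (p, n) satisfying the zipper invariants, every key k ≠ [], and every value v, writing l = modelize_node(n): if k does not occur among the keys of l and {k} together with the keys of l is prefix-free, then insert(z, k, v) = Some z' for some budzipper z' = (p', n') satisfying the zipper invariants with modelize_path(p') = modelize_path(p), and with modelize_node(n') having a prefix-free, strictly lexicographically increasing key list, lookup(modelize_node(n'), k) = Some (Value v), and lookup(modelize_node(n'), k') = lookup(l, k') for every key k' ≠ k; and otherwise insert(z, k, v) = None. -/

import Mathlib

/-- A side is `L` or `R`. -/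
inductive Side : Type
  | L | R
deriving DecidableEq, Repr

/-- A key is a list of sides. -/
abbrev Key := List Side

/-- The strict order `L < R` on sides. -/
def Side.lt : Side → Side → Prop := fun a b => a = Side.L ∧ b = Side.R

/-- The strict lexicographic order on keys induced by `L < R`. -/
def keyLt : Key → Key → Prop := List.Lex Side.lt

/-- A list of keys is prefix-free: for any two distinct keys in it,
neither is a prefix of the other. -/
def PrefixFreeList (ks : List Key) : Prop :=
  List.Pairwise (fun a b => ¬ a <+: b ∧ ¬ b <+: a) ks

/-- A set of keys is prefix-free. -/
def PrefixFreeSet (S : Set Key) : Prop :=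
  ∀ a ∈ S, ∀ b ∈ S, a ≠ b → ¬ a <+: b

/-- A list of keys is strictly increasing in the lexicographic order. -/
def SortedKeys (ks : List Key) : Prop := List.Pairwise keyLt ks

/-- Key list of an association list is prefix-free and strictly increasing. -/
def GoodKeyList (ks : List Key) : Prop := PrefixFreeList ks ∧ SortedKeys ks

/-- Prepend the key `s` to the key of every entry. -/
def prependAll {β : Type _} (s : Key) (l : List (Key × β)) : List (Key × β) :=
  l.map (fun e => (s ++ e.1, e.2))

/-- `lookup l k` is `some` of the value of the first entry of `l` with key `k`. -/
def lookupA {β : Type _} (l : List (Key × β)) (k : Key) : Option β :=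
  (l.find? (fun e => decide (e.1 = k))).map Prod.snd
/-- Extended Plebeia tree nodes, over a value type `α`, index type `ι`, hash type `η`. -/
inductive PNode (α ι η : Type) : Type
  | leaf : α → Option ι → Option η → PNode α ι η
  | branch : PNode α ι η → PNode α ι η → Option ι → Option η → PNode α ι η
  | extender : Key → PNode α ι η → Option ι → PNode α ι η
  | bud : Option (PNode α ι η) → Option ι → Option η → PNode α ι η

variable {α ι η : Type}

def PNode.isExtender : PNode α ι η → Prop
  | .extender _ _ _ => True
  | _ => False

def PNode.isBud : PNode α ι η → Prop
  | .bud _ _ _ => True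
  | _ => False

def PNode.isLeaf : PNode α ι η → Prop
  | .leaf _ _ _ => True
  | _ => False

/-- A node is indexed if its `Option index` field is `Some`. -/
def PNode.indexed : PNode α ι η → Prop
  | .leaf _ oi _ => oi.isSome
  | .branch _ _ oi _ => oi.isSome
  | .extender _ _ oi => oi.isSome
  | .bud _ oi _ => oi.isSome

/-- A leaf/branch/bud is hashed if its `Option hash` field is `Some`;
an extender is hashed if its child is hashed. -/
def PNode.hashed : PNode α ι η → Prop
  | .leaf _ _ oh => oh.isSome
  | .branch _ _ _ oh => oh.isSome
  | .extender _ n _ => n.hashed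
  | .bud _ _ oh => oh.isSome

/-- Structural invariants (SI1)-(SI6) at every subtree. -/
def PNode.inv : PNode α ι η → Prop
  | .leaf _ _ _ => True
  | .branch l r oi oh =>
      (oh.isSome → (l.hashed ∧ r.hashed)) ∧        -- SI3
      (oi.isSome → oh.isSome = true) ∧             -- SI4
      (oi.isSome → (l.indexed ∧ r.indexed)) ∧      -- SI5
      l.inv ∧ r.inv
  | .extender s n oi =>
      (¬ n.isExtender) ∧                           -- SI1
      s ≠ [] ∧                                     -- SI2
      (oi.isSome → n.hashed) ∧                     -- SI4 (extender is hashed iff child is)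
      (oi.isSome → n.indexed) ∧                    -- SI5
      n.inv
  | .bud none oi oh => (oi.isSome → oh.isSome = true)  -- SI4
  | .bud (some n) oi oh =>
      (¬ n.isBud) ∧ (¬ n.isLeaf) ∧                 -- SI6
      (oh.isSome → n.hashed) ∧                     -- SI3
      (oi.isSome → oh.isSome = true) ∧             -- SI4
      (oi.isSome → n.indexed) ∧                    -- SI5
      n.inv

/-- Nested values: either a value or a nested key--value store (association list). -/
inductive NestedValue (α : Type) : Type
  | value : α → NestedValue α
  | map : List (Key × NestedValue α) → NestedValue α

/-- `modelize_node_aux`. -/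
def modelizeNodeAux : PNode α ι η → List (Key × NestedValue α)
  | .leaf v _ _ => [([], .value v)]
  | .branch l r _ _ =>
      prependAll [Side.L] (modelizeNodeAux l) ++ prependAll [Side.R] (modelizeNodeAux r)
  | .extender s n _ => prependAll s (modelizeNodeAux n)
  | .bud none _ _ => [([], .map [])]
  | .bud (some n) _ _ => [([], .map (modelizeNodeAux n))]
/-- Zipper paths over extended Plebeia nodes. -/
inductive ZPath (α ι η : Type) : Type
  | top : ZPath α ι η
  | left : ZPath α ι η → PNode α ι η → Option ι → Option η → ZPath α ι η
  | right : PNode α ι η → ZPath α ι η → Option ι → Option η → ZPath α ι η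
  | extended : ZPath α ι η → Key → Option ι → ZPath α ι η
  | budded : ZPath α ι η → Option ι → Option η → ZPath α ι η

def ZPath.isExtended : ZPath α ι η → Prop
  | .extended _ _ _ => True
  | _ => False

def ZPath.isBudded : ZPath α ι η → Prop
  | .budded _ _ _ => True
  | _ => False

/-- A `Left`/`Right`/`Budded` path is hashed iff its hash field is `Some`;
`Extended p s oi` is hashed iff `p` is; `Top` is not hashed. -/
def ZPath.hashed : ZPath α ι η → Prop
  | .top => False
  | .left _ _ _ oh => oh.isSome
  | .right _ _ _ oh => oh.isSome
  | .extended p _ _ => p.hashed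
  | .budded _ _ oh => oh.isSome

/-- A non-`Top` path is indexed iff its index field is `Some`. -/
def ZPath.indexed : ZPath α ι η → Prop
  | .top => False
  | .left _ _ oi _ => oi.isSome
  | .right _ _ oi _ => oi.isSome
  | .extended _ _ oi => oi.isSome
  | .budded _ oi _ => oi.isSome

/-- (ZI-ZPath). -/
def ZPath.inv : ZPath α ι η → Prop
  | .top => True
  | .left p' n' oi oh =>
      (p'.hashed → oh.isSome = true) ∧
      (oh.isSome → n'.hashed) ∧
      (p'.indexed → oi.isSome = true) ∧
      (oi.isSome → n'.indexed) ∧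
      (oi.isSome → oh.isSome = true) ∧
      n'.inv ∧ p'.inv
  | .right n' p' oi oh =>
      (p'.hashed → oh.isSome = true) ∧
      (oh.isSome → n'.hashed) ∧
      (p'.indexed → oi.isSome = true) ∧
      (oi.isSome → n'.indexed) ∧
      (oi.isSome → oh.isSome = true) ∧
      n'.inv ∧ p'.inv
  | .extended p' s oi =>
      (p'.indexed → oi.isSome = true) ∧
      (¬ p'.isExtended) ∧
      s ≠ [] ∧
      p'.inv
  | .budded p' oi oh =>
      (p'.hashed → oh.isSome = true) ∧
      (p'.indexed → oi.isSome = true) ∧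
      (oi.isSome → oh.isSome = true) ∧
      (¬ p'.isBudded) ∧
      p'.inv

/-- (ZI-Connect): the junction between the path and the cursor node is well-formed. -/
def ZPath.connect : ZPath α ι η → PNode α ι η → Prop
  | .top, _ => True
  | .left _ _ oi oh, n => (oh.isSome → n.hashed) ∧ (oi.isSome → n.indexed)
  | .right _ _ oi oh, n => (oh.isSome → n.hashed) ∧ (oi.isSome → n.indexed)
  | .extended p' _ oi, n =>
      (p'.hashed → n.hashed) ∧ (oi.isSome → n.indexed) ∧ (¬ n.isExtender)
  | .budded _ oi oh, n =>
      (oh.isSome → n.hashed) ∧ (oi.isSome → n.indexed) ∧ (¬ n.isBud) ∧ (¬ n.isLeaf)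

/-- The zipper invariants: (ZI-Node), (ZI-ZPath) and (ZI-Connect). -/
def zipperInv (p : ZPath α ι η) (n : PNode α ι η) : Prop :=
  n.inv ∧ p.inv ∧ p.connect n

/-- `go_up`: move the cursor of a zipper one step up. -/
def goUp : ZPath α ι η × PNode α ι η → Option (ZPath α ι η × PNode α ι η)
  | (.top, _) => none
  | (.left p n₂ oi oh, n) => some (p, .branch n n₂ oi oh)
  | (.right n₁ p oi oh, n) => some (p, .branch n₁ n oi oh)
  | (.extended p s oi, n) => some (p, .extender s n oi)
  | (.budded p oi oh, n) => some (p, .bud (some n) oi oh)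

/-- For a `Bud` node `n`, `modelize_node n` is the association list `m` such
that `modelize_node_aux n = [([], Map m)]`. -/
def modelizeNode (n : PNode α ι η) : List (Key × NestedValue α) :=
  match modelizeNodeAux n with
  | [(_, .map m)] => m
  | _ => []

/-- Number of frames of a path. -/
def ZPath.len : ZPath α ι η → Nat
  | .top => 0
  | .left p _ _ _ => p.len + 1
  | .right _ p _ _ => p.len + 1
  | .extended p _ _ => p.len + 1
  | .budded p _ _ => p.len + 1

/-- Apply `go_up` repeatedly until the node just produced is a `Bud` or the path
becomes `Top`. -/
def goUpToBudOrTop : ZPath α ι η → PNode α ι η → ZPath α ι η × PNode α ι η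
  | .top, n => (.top, n)
  | .left p n₂ oi oh, n => goUpToBudOrTop p (.branch n n₂ oi oh)
  | .right n₁ p oi oh, n => goUpToBudOrTop p (.branch n₁ n oi oh)
  | .extended p s oi, n => goUpToBudOrTop p (.extender s n oi)
  | .budded p oi oh, n => (p, .bud (some n) oi oh)

theorem goUpToBudOrTop_len_le (p : ZPath α ι η) :
    ∀ n : PNode α ι η, (goUpToBudOrTop p n).1.len ≤ p.len := by
  induction p with
  | top => intro n; simp [goUpToBudOrTop, ZPath.len]
  | left p n₂ oi oh ih =>
      intro n
      simp only [goUpToBudOrTop, ZPath.len]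
      exact le_trans (ih _) (Nat.le_succ _)
  | right n₁ p oi oh ih =>
      intro n
      simp only [goUpToBudOrTop, ZPath.len]
      exact le_trans (ih _) (Nat.le_succ _)
  | extended p s oi ih =>
      intro n
      simp only [goUpToBudOrTop, ZPath.len]
      exact le_trans (ih _) (Nat.le_succ _)
  | budded p oi oh ih =>
      intro n
      simp only [goUpToBudOrTop, ZPath.len]
      exact Nat.le_succ _

/-- The concatenation of the labels of the frames between the nearest enclosing
`Budded` frame (or the top) and the cursor: `L` for a `Left` frame, `R` for a
`Right` frame, the key `s` for an `Extended` frame. -/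
def keyToNearestBud : ZPath α ι η → Key
  | .top => []
  | .budded _ _ _ => []
  | .left p _ _ _ => keyToNearestBud p ++ [Side.L]
  | .right _ p _ _ => keyToNearestBud p ++ [Side.R]
  | .extended p s _ => keyToNearestBud p ++ s

/-- Turn a node into a `Bud` if it is not one already. -/
def budify : PNode α ι η → PNode α ι η
  | .bud oc oi oh => .bud oc oi oh
  | .leaf v oi oh => .bud (some (.leaf v oi oh)) none none
  | .branch l r oi oh => .bud (some (.branch l r oi oh)) none none
  | .extender s n oi => .bud (some (.extender s n oi)) none none

/-- One entry of `modelize_path` for a non-`Top` path `p`: the key from the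
nearest enclosing bud to the cursor, together with the model of that bud with
the entry at this key (the dummy node) removed. -/
def modelizePathEntry [Inhabited α] (p : ZPath α ι η) :
    Key × List (Key × NestedValue α) :=
  let n₀ := (goUpToBudOrTop p (.leaf default none none)).2
  let κ := keyToNearestBud p
  (κ, (modelizeNode (budify n₀)).eraseP (fun e => decide (e.1 = κ)))

/-- `modelize_path`. -/
def modelizePath [Inhabited α] :
    ZPath α ι η → List (Key × List (Key × NestedValue α))
  | .top => []
  | .left p' n' oi oh =>
      modelizePathEntry (ZPath.left p' n' oi oh) ::
        modelizePath (goUpToBudOrTop (ZPath.left p' n' oi oh)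
          (PNode.leaf default none none)).1
  | .right n' p' oi oh =>
      modelizePathEntry (ZPath.right n' p' oi oh) ::
        modelizePath (goUpToBudOrTop (ZPath.right n' p' oi oh)
          (PNode.leaf default none none)).1
  | .extended p' s oi =>
      modelizePathEntry (ZPath.extended p' s oi) ::
        modelizePath (goUpToBudOrTop (ZPath.extended p' s oi)
          (PNode.leaf default none none)).1
  | .budded p' oi oh =>
      modelizePathEntry (ZPath.budded p' oi oh) ::
        modelizePath (goUpToBudOrTop (ZPath.budded p' oi oh)
          (PNode.leaf default none none)).1
termination_by p => p.len
decreasing_by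
  all_goals
    simp only [goUpToBudOrTop, ZPath.len]
    first
      | exact Nat.lt_succ_of_le (goUpToBudOrTop_len_le _ _)
      | exact Nat.lt_succ_of_le le_rfl

/-! Insertion follows `k` down through branches and extenders. New structure appears only
where `k` leaves the tree inside an extender: if its key is `c ++ e :: y` and `k = c ++ d :: x`
with `d ≠ e`, the extender becomes `c`, then a branch with `x ↦ v` on side `d` and `y` followed
by the old child on the other side (`fork`). As branches list their `L`-keys before their
`R`-keys, the model of the result is the old model with `(k, v)` inserted in lexicographic
position. The new nodes copy the index and hash fields of the extender they replace, so no
hashed or indexed flag changes and the zipper invariants are preserved. -/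

namespace List

variable {β : Type*}

theorem prefix_or_diverge [DecidableEq β] :
    ∀ k s : List β, (∃ x, k = s ++ x) ∨ (∃ e y, s = k ++ e :: y) ∨
      ∃ c d x e y, d ≠ e ∧ k = c ++ d :: x ∧ s = c ++ e :: y
  | k, [] => Or.inl ⟨k, rfl⟩
  | [], e :: y => Or.inr (Or.inl ⟨e, y, rfl⟩)
  | d :: k, e :: s => by
    by_cases hde : d = e
    · subst hde
      rcases prefix_or_diverge k s with
        ⟨x, rfl⟩ | ⟨e, y, rfl⟩ | ⟨c, d', x, e, y, h, rfl, rfl⟩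
      · exact Or.inl ⟨x, rfl⟩
      · exact Or.inr (Or.inl ⟨e, y, rfl⟩)
      · exact Or.inr (Or.inr ⟨d :: c, d', x, e, y, h, rfl, rfl⟩)
    · exact Or.inr (Or.inr ⟨[], d, k, e, s, hde, rfl, rfl⟩)

variable (r : β → β → Prop) [DecidableRel r]

theorem orderedInsert_append_of_forall_rel {a : β} (A : List β) {B : List β}
    (h : ∀ b ∈ B, r a b) : (A ++ B).orderedInsert r a = A.orderedInsert r a ++ B := by
  induction A with
  | nil => cases B with
    | nil => rfl
    | cons b B => simp [h b mem_cons_self]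
  | cons c A ih => by_cases hc : r a c <;> simp [hc, ih]

theorem orderedInsert_append_of_forall_not_rel {a : β} {A : List β} (B : List β)
    (h : ∀ b ∈ A, ¬ r a b) : (A ++ B).orderedInsert r a = A ++ B.orderedInsert r a := by
  induction A with
  | nil => rfl
  | cons c A ih => simp_all

end List

instance : Std.Irrefl Side.lt := ⟨by rintro a ⟨rfl, h⟩; cases h⟩

instance : DecidableRel Side.lt :=
  fun a b => inferInstanceAs (Decidable (a = .L ∧ b = .R))

instance : DecidableRel keyLt := List.Lex.decidableRel Side.lt

instance : DecidablePred PrefixFreeList :=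
  fun ks => inferInstanceAs (Decidable (List.Pairwise _ ks))

theorem keyLt_append_left_iff (s : Key) {a b : Key} : keyLt (s ++ a) (s ++ b) ↔ keyLt a b := by
  induction s with
  | nil => rfl
  | cons x s ih => exact List.lex_cons_iff.trans ih

theorem keyLt_L_R (a b : Key) : keyLt ([.L] ++ a) ([.R] ++ b) := List.Lex.rel ⟨rfl, rfl⟩

theorem not_keyLt_R_L (a b : Key) : ¬ keyLt ([.R] ++ a) ([.L] ++ b) := by
  rintro (_ | ⟨⟨⟩, _⟩)

theorem prefixFreeList_map_append_left (s : Key) {ks : List Key} :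
    PrefixFreeList (ks.map (s ++ ·)) ↔ PrefixFreeList ks := by
  simp only [PrefixFreeList, List.pairwise_map, List.prefix_append_right_inj]

theorem sortedKeys_map_append_left (s : Key) {ks : List Key} :
    SortedKeys (ks.map (s ++ ·)) ↔ SortedKeys ks := by
  simp only [SortedKeys, List.pairwise_map, keyLt_append_left_iff]

theorem goodKeyList_map_append_left (s : Key) {ks : List Key} :
    GoodKeyList (ks.map (s ++ ·)) ↔ GoodKeyList ks := by
  rw [GoodKeyList, GoodKeyList, prefixFreeList_map_append_left, sortedKeys_map_append_left]

theorem GoodKeyList.append_L_R {A B : List Key} (hA : GoodKeyList A) (hB : GoodKeyList B) :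
    GoodKeyList (A.map ([.L] ++ ·) ++ B.map ([.R] ++ ·)) := by
  rw [← goodKeyList_map_append_left [.L]] at hA
  rw [← goodKeyList_map_append_left [.R]] at hB
  refine ⟨List.pairwise_append.mpr ⟨hA.1, hB.1, ?_⟩,
    List.pairwise_append.mpr ⟨hA.2, hB.2, ?_⟩⟩
  all_goals
    simp only [List.mem_map]
    rintro _ ⟨a, -, rfl⟩ _ ⟨b, -, rfl⟩
  · simp
  · exact keyLt_L_R a b

theorem prefixFreeList_iff_nodup_and_prefixFreeSet (ks : List Key) :
    PrefixFreeList ks ↔ ks.Nodup ∧ PrefixFreeSet {x | x ∈ ks} := by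
  have : Std.Symm (fun a b : Key => ¬ a <+: b ∧ ¬ b <+: a) := ⟨fun _ _ h => h.symm⟩
  refine ⟨fun h => ⟨h.imp fun hab hrfl => ?_, fun a ha b hb hne => (h.forall ha hb hne).1⟩,
    fun ⟨hnd, hpf⟩ => hnd.pairwise_of_forall_ne fun a ha b hb hne =>
      ⟨hpf a ha b hb hne, hpf b hb a ha hne.symm⟩⟩
  subst hrfl
  exact hab.1 (List.prefix_refl _)

theorem prefixFreeList_cons_iff {ks : List Key} (hks : PrefixFreeList ks) (k : Key) :
    PrefixFreeList (k :: ks) ↔ k ∉ ks ∧ PrefixFreeSet (insert k {x | x ∈ ks}) := by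
  have hnd := ((prefixFreeList_iff_nodup_and_prefixFreeSet ks).mp hks).1
  rw [prefixFreeList_iff_nodup_and_prefixFreeSet, List.nodup_cons]
  simp only [List.mem_cons, Set.ofPred_or, Set.ofPred_eq_eq_singleton, Set.singleton_union]
  tauto

section AssocList

variable {β : Type*}

theorem map_fst_prependAll (s : Key) (m : List (Key × β)) :
    (prependAll s m).map Prod.fst = (m.map Prod.fst).map (s ++ ·) := by
  simp [prependAll]

theorem prependAll_prependAll (s s' : Key) (m : List (Key × β)) :
    prependAll s (prependAll s' m) = prependAll (s ++ s') m := by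
  simp [prependAll, Function.comp_def]

theorem lookupA_cons (e : Key × β) (m : List (Key × β)) (k : Key) :
    lookupA (e :: m) k = if e.1 = k then some e.2 else lookupA m k := by
  by_cases h : e.1 = k <;> simp [lookupA, h]

variable {r : Key × β → Key × β → Prop} [DecidableRel r]

theorem lookupA_orderedInsert_self {k : Key} {w : β} {m : List (Key × β)}
    (hk : k ∉ m.map Prod.fst) : lookupA (m.orderedInsert r (k, w)) k = some w := by
  induction m with
  | nil => simp [lookupA]
  | cons e m ih =>
    simp only [List.map_cons, List.mem_cons, not_or] at hk
    by_cases h : r (k, w) e <;> simp [h, lookupA_cons, Ne.symm hk.1, ih hk.2]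

theorem lookupA_orderedInsert_of_ne {k k' : Key} (w : β) (m : List (Key × β)) (hk : k' ≠ k) :
    lookupA (m.orderedInsert r (k, w)) k' = lookupA m k' := by
  induction m with
  | nil => simp [lookupA, hk.symm]
  | cons e m ih => by_cases h : r (k, w) e <;> simp [h, lookupA_cons, hk.symm, ih]

def insertSorted (k : Key) (w : β) (m : List (Key × β)) : List (Key × β) :=
  m.orderedInsert (fun x y => keyLt x.1 y.1) (k, w)

theorem insertSorted_prependAll (s k : Key) (w : β) (m : List (Key × β)) :
    insertSorted (s ++ k) w (prependAll s m) = prependAll s (insertSorted k w m) := by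
  unfold prependAll insertSorted
  exact (List.map_orderedInsert (fun x y => keyLt x.1 y.1) (fun x y => keyLt x.1 y.1)
    (fun e => (s ++ e.1, e.2)) m (k, w) (fun _ _ => (keyLt_append_left_iff s).symm)
    (fun _ _ => (keyLt_append_left_iff s).symm)).symm

theorem insertSorted_L (k : Key) (w : β) (A B : List (Key × β)) :
    insertSorted ([.L] ++ k) w (prependAll [.L] A ++ prependAll [.R] B) =
      prependAll [.L] (insertSorted k w A) ++ prependAll [.R] B := by
  rw [insertSorted, List.orderedInsert_append_of_forall_rel, ← insertSorted,
    insertSorted_prependAll]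
  simp only [prependAll, List.mem_map]
  rintro _ ⟨b, -, rfl⟩
  exact keyLt_L_R k b.1

theorem insertSorted_R (k : Key) (w : β) (A B : List (Key × β)) :
    insertSorted ([.R] ++ k) w (prependAll [.L] A ++ prependAll [.R] B) =
      prependAll [.L] A ++ prependAll [.R] (insertSorted k w B) := by
  rw [insertSorted, List.orderedInsert_append_of_forall_not_rel, ← insertSorted,
    insertSorted_prependAll]
  simp only [prependAll, List.mem_map]
  rintro _ ⟨a, -, rfl⟩
  exact not_keyLt_R_L k a.1

end AssocList

theorem goodKeyList_modelizeNodeAux :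
    ∀ t : PNode α ι η, GoodKeyList ((modelizeNodeAux t).map Prod.fst)
  | .leaf _ _ _ | .bud none _ _ | .bud (some _) _ _ =>
    ⟨List.pairwise_singleton _ _, List.pairwise_singleton _ _⟩
  | .branch l r _ _ => by
    simpa only [modelizeNodeAux, List.map_append, map_fst_prependAll] using
      (goodKeyList_modelizeNodeAux l).append_L_R (goodKeyList_modelizeNodeAux r)
  | .extender s t _ => by
    simpa only [modelizeNodeAux, map_fst_prependAll, goodKeyList_map_append_left] using
      goodKeyList_modelizeNodeAux t

theorem modelizeNodeAux_ne_nil : ∀ t : PNode α ι η, modelizeNodeAux t ≠ []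
  | .leaf _ _ _ | .bud none _ _ | .bud (some _) _ _ => List.cons_ne_nil _ _
  | .branch l _ _ _ => by
    simpa [modelizeNodeAux, prependAll] using fun h _ => modelizeNodeAux_ne_nil l h
  | .extender _ t _ => by
    simpa [modelizeNodeAux, prependAll] using modelizeNodeAux_ne_nil t

def PNode.hash : PNode α ι η → Option η
  | .leaf _ _ oh | .branch _ _ _ oh | .bud _ _ oh => oh
  | .extender _ t _ => t.hash

theorem PNode.hashed_iff_isSome_hash : ∀ t : PNode α ι η, t.hashed ↔ t.hash.isSome
  | .leaf _ _ _ | .branch _ _ _ _ | .bud _ _ _ => Iff.rfl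
  | .extender _ t _ => t.hashed_iff_isSome_hash

def mkExtender (oi : Option ι) : Key → PNode α ι η → PNode α ι η
  | [], t => t
  | s, t => .extender s t oi

section MkExtender

variable (oi : Option ι) (s : Key) (t : PNode α ι η)

theorem modelizeNodeAux_mkExtender :
    modelizeNodeAux (mkExtender oi s t) = prependAll s (modelizeNodeAux t) := by
  cases s <;> simp [mkExtender, modelizeNodeAux, prependAll]

theorem hashed_mkExtender : (mkExtender oi s t).hashed ↔ t.hashed := by
  cases s <;> rfl

variable {oi s t}

theorem indexed_mkExtender (h : oi.isSome → t.indexed) (hoi : oi.isSome) :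
    (mkExtender oi s t).indexed := by
  cases s
  exacts [h hoi, hoi]

theorem inv_mkExtender (hne : ¬ t.isExtender) (hh : oi.isSome → t.hashed)
    (hi : oi.isSome → t.indexed) (ht : t.inv) : (mkExtender oi s t).inv := by
  cases s
  exacts [ht, ⟨hne, List.cons_ne_nil _ _, hh, hi, ht⟩]

end MkExtender

def branchAt (d : Side) (a b : PNode α ι η) (oi : Option ι) (oh : Option η) : PNode α ι η :=
  match d with
  | .L => .branch a b oi oh
  | .R => .branch b a oi oh

/-- What replaces `extender (c ++ e :: y) t oi` when `c ++ d :: x`, with `d ≠ e`, is inserted. -/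
def fork (v : α) (oi : Option ι) (c : Key) (d : Side) (x y : Key) (t : PNode α ι η) :
    PNode α ι η :=
  mkExtender oi c
    (branchAt d (mkExtender oi x (.leaf v oi t.hash)) (mkExtender oi y t) oi t.hash)

section Fork

variable (v : α) (oi : Option ι) (c : Key) (d : Side) (x y : Key) (t : PNode α ι η)

theorem modelizeNodeAux_fork {e : Side} (hde : d ≠ e) :
    modelizeNodeAux (fork v oi c d x y t) =
      insertSorted (c ++ d :: x) (.value v) (prependAll (c ++ e :: y) (modelizeNodeAux t)) := by
  rw [← prependAll_prependAll, insertSorted_prependAll, fork, modelizeNodeAux_mkExtender]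
  congr 1
  have hleaf : modelizeNodeAux (mkExtender oi x (.leaf v oi t.hash)) =
      insertSorted x (.value v) ([] : List (Key × NestedValue α)) := by
    simp [modelizeNodeAux_mkExtender, modelizeNodeAux, prependAll, insertSorted]
  rw [show prependAll (e :: y) (modelizeNodeAux t) = prependAll [e] (prependAll y _) from
    (prependAll_prependAll [e] y _).symm]
  cases d <;> cases e <;> simp only [ne_eq, not_true_eq_false] at hde <;>
    rw [branchAt, modelizeNodeAux, hleaf, modelizeNodeAux_mkExtender]
  · exact (insertSorted_L x (NestedValue.value v) [] _).symm
  · have h := insertSorted_R x (NestedValue.value v) (prependAll y (modelizeNodeAux t)) []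
    rw [show prependAll [Side.R] ([] : List (Key × NestedValue α)) = [] from rfl,
      List.append_nil] at h
    exact h.symm

theorem hashed_fork (h : t.hashed) : (fork v oi c d x y t).hashed := by
  rw [fork, hashed_mkExtender]
  cases d <;> exact t.hashed_iff_isSome_hash.mp h

theorem indexed_fork (hoi : oi.isSome) : (fork v oi c d x y t).indexed :=
  indexed_mkExtender (by cases d <;> exact id) hoi

theorem inv_fork {s : Key} (ht : (PNode.extender s t oi).inv) : (fork v oi c d x y t).inv := by
  obtain ⟨hne, -, hh, hi, ht⟩ := ht
  have hhash : oi.isSome → t.hash.isSome := fun h => t.hashed_iff_isSome_hash.mp (hh h)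
  have hleaf : (mkExtender oi x (.leaf v oi t.hash)).inv := inv_mkExtender id hhash id trivial
  have hold : (mkExtender oi y t).inv := inv_mkExtender hne hh hi ht
  have hleaf_hashed : t.hash.isSome → (mkExtender oi x (.leaf v oi t.hash)).hashed :=
    (hashed_mkExtender oi x (.leaf v oi t.hash)).mpr
  have hold_hashed : t.hash.isSome → (mkExtender oi y t).hashed :=
    fun h => (hashed_mkExtender ..).mpr (t.hashed_iff_isSome_hash.mpr h)
  have hleaf_indexed := indexed_mkExtender (s := x) (t := .leaf v oi t.hash) id
  have hold_indexed := indexed_mkExtender (s := y) hi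
  refine inv_mkExtender (by cases d <;> exact id) (by cases d <;> exact hhash)
    (by cases d <;> exact id) ?_
  cases d
  · exact ⟨fun h => ⟨hleaf_hashed h, hold_hashed h⟩, hhash,
      fun h => ⟨hleaf_indexed h, hold_indexed h⟩, hleaf, hold⟩
  · exact ⟨fun h => ⟨hold_hashed h, hleaf_hashed h⟩, hhash,
      fun h => ⟨hold_indexed h, hleaf_indexed h⟩, hold, hleaf⟩

theorem not_isBud_and_not_isLeaf_fork :
    ¬ (fork v oi c d x y t).isBud ∧ ¬ (fork v oi c d x y t).isLeaf := by
  cases c <;> cases d <;> exact ⟨id, id⟩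

end Fork

def splitCommonPrefix : Key → Key → Key × Key × Key
  | a :: k, b :: s =>
    if a = b then (a :: (splitCommonPrefix k s).1, (splitCommonPrefix k s).2)
    else ([], a :: k, b :: s)
  | k, s => ([], k, s)

theorem splitCommonPrefix_append (c k s : Key) :
    splitCommonPrefix (c ++ k) (c ++ s) =
      (c ++ (splitCommonPrefix k s).1, (splitCommonPrefix k s).2) := by
  induction c with
  | nil => rfl
  | cons a c ih => simp [splitCommonPrefix, ih]

def insNode (v : α) : PNode α ι η → Key → PNode α ι η
  | .branch l r oi oh, .L :: k => .branch (insNode v l k) r oi oh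
  | .branch l r oi oh, .R :: k => .branch l (insNode v r k) oi oh
  | .extender s t oi, k =>
    match splitCommonPrefix k s with
    | (_, x, []) => .extender s (insNode v t x) oi
    | (c, d :: x, _ :: y) => fork v oi c d x y t
    | _ => .extender s t oi
  -- here and in the case above, `k` and some key of the tree are comparable for `<+:`
  | t, _ => t

section InsNode

variable (v : α)

theorem insNode_extender_append (oi : Option ι) (t : PNode α ι η) (s x : Key) :
    insNode v (.extender s t oi) (s ++ x) = .extender s (insNode v t x) oi := by
  have h := splitCommonPrefix_append s x []
  cases x <;> simp_all [insNode, splitCommonPrefix]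

theorem insNode_extender_of_prefix (oi : Option ι) (t : PNode α ι η) (k : Key) (e : Side)
    (y : Key) : insNode v (.extender (k ++ e :: y) t oi) k = .extender (k ++ e :: y) t oi := by
  have h := splitCommonPrefix_append k [] (e :: y)
  simp_all [insNode, splitCommonPrefix]

theorem insNode_extender_fork (oi : Option ι) (t : PNode α ι η) (c : Key) {d e : Side}
    (hde : d ≠ e) (x y : Key) :
    insNode v (.extender (c ++ e :: y) t oi) (c ++ d :: x) = fork v oi c d x y t := by
  have h := splitCommonPrefix_append c (d :: x) (e :: y)
  simp_all [insNode, splitCommonPrefix]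

theorem hashed_insNode : ∀ (t : PNode α ι η) (k : Key), t.hashed → (insNode v t k).hashed
  | .leaf _ _ _, _, h | .bud _ _ _, _, h | .branch _ _ _ _, [], h => h
  | .branch _ _ _ _, .L :: _, h | .branch _ _ _ _, .R :: _, h => h
  | .extender s t oi, k, h => by
    rcases List.prefix_or_diverge k s with
      ⟨x, rfl⟩ | ⟨e, y, rfl⟩ | ⟨c, d, x, e, y, hde, rfl, rfl⟩
    · rw [insNode_extender_append]; exact hashed_insNode t x h
    · rwa [insNode_extender_of_prefix]
    · rw [insNode_extender_fork v oi t c hde]; exact hashed_fork v oi c d x y t h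

theorem indexed_insNode : ∀ (t : PNode α ι η) (k : Key), t.indexed → (insNode v t k).indexed
  | .leaf _ _ _, _, h | .bud _ _ _, _, h | .branch _ _ _ _, [], h => h
  | .branch _ _ _ _, .L :: _, h | .branch _ _ _ _, .R :: _, h => h
  | .extender s t oi, k, h => by
    rcases List.prefix_or_diverge k s with
      ⟨x, rfl⟩ | ⟨e, y, rfl⟩ | ⟨c, d, x, e, y, hde, rfl, rfl⟩
    · rwa [insNode_extender_append]
    · rwa [insNode_extender_of_prefix]
    · rw [insNode_extender_fork v oi t c hde]; exact indexed_fork v oi c d x y t h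

theorem isExtender_of_insNode :
    ∀ (t : PNode α ι η) (k : Key), (insNode v t k).isExtender → t.isExtender
  | .leaf _ _ _, _, h | .bud _ _ _, _, h | .branch _ _ _ _, [], h => h
  | .branch _ _ _ _, .L :: _, h | .branch _ _ _ _, .R :: _, h => h
  | .extender _ _ _, _, _ => trivial

theorem not_isBud_and_not_isLeaf_insNode : ∀ (t : PNode α ι η) (k : Key),
    ¬ t.isBud ∧ ¬ t.isLeaf → ¬ (insNode v t k).isBud ∧ ¬ (insNode v t k).isLeaf
  | .leaf _ _ _, _, h | .bud _ _ _, _, h | .branch _ _ _ _, [], h => h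
  | .branch _ _ _ _, .L :: _, h | .branch _ _ _ _, .R :: _, h => h
  | .extender s t oi, k, h => by
    rcases List.prefix_or_diverge k s with
      ⟨x, rfl⟩ | ⟨e, y, rfl⟩ | ⟨c, d, x, e, y, hde, rfl, rfl⟩
    · rwa [insNode_extender_append]
    · rwa [insNode_extender_of_prefix]
    · rw [insNode_extender_fork v oi t c hde]
      exact not_isBud_and_not_isLeaf_fork v oi c d x y t

theorem inv_insNode : ∀ (t : PNode α ι η) (k : Key), t.inv → (insNode v t k).inv
  | .leaf _ _ _, _, h | .bud _ _ _, _, h | .branch _ _ _ _, [], h => h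
  | .branch l r oi oh, .L :: k, ⟨hh, hoi, hi, hl, hr⟩ =>
    ⟨fun h => ⟨hashed_insNode v l k (hh h).1, (hh h).2⟩, hoi,
      fun h => ⟨indexed_insNode v l k (hi h).1, (hi h).2⟩, inv_insNode l k hl, hr⟩
  | .branch l r oi oh, .R :: k, ⟨hh, hoi, hi, hl, hr⟩ =>
    ⟨fun h => ⟨(hh h).1, hashed_insNode v r k (hh h).2⟩, hoi,
      fun h => ⟨(hi h).1, indexed_insNode v r k (hi h).2⟩, hl, inv_insNode r k hr⟩
  | .extender s t oi, k, h => by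
    rcases List.prefix_or_diverge k s with
      ⟨x, rfl⟩ | ⟨e, y, rfl⟩ | ⟨c, d, x, e, y, hde, rfl, rfl⟩
    · obtain ⟨hne, hs, hh, hi, ht⟩ := h
      rw [insNode_extender_append]
      exact ⟨fun h => hne (isExtender_of_insNode v t x h), hs,
        fun h => hashed_insNode v t x (hh h), fun h => indexed_insNode v t x (hi h),
        inv_insNode t x ht⟩
    · rwa [insNode_extender_of_prefix]
    · rw [insNode_extender_fork v oi t c hde]; exact inv_fork v oi c d x y t h

theorem modelizeNodeAux_insNode : ∀ (t : PNode α ι η) (k : Key),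
    PrefixFreeList (k :: (modelizeNodeAux t).map Prod.fst) →
      modelizeNodeAux (insNode v t k) = insertSorted k (.value v) (modelizeNodeAux t)
  | .leaf _ _ _, _, h | .bud none _ _, _, h | .bud (some _) _ _, _, h =>
    absurd List.nil_prefix ((List.pairwise_cons.mp h).1 [] (by simp [modelizeNodeAux])).2
  | .branch l r oi oh, [], h => by
    obtain ⟨a, ha⟩ := List.exists_mem_of_ne_nil _ (modelizeNodeAux_ne_nil (.branch l r oi oh))
    exact absurd List.nil_prefix ((List.pairwise_cons.mp h).1 a.1 (List.mem_map_of_mem ha)).1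
  | .branch l r oi oh, .L :: k, h => by
    simp only [insNode, modelizeNodeAux, List.map_append, map_fst_prependAll] at h ⊢
    have hl : PrefixFreeList ((k :: (modelizeNodeAux l).map Prod.fst).map ([.L] ++ ·)) :=
      h.sublist ((List.sublist_append_left _ _).cons_cons _)
    rw [modelizeNodeAux_insNode l k ((prefixFreeList_map_append_left _).mp hl)]
    exact (insertSorted_L k _ _ _).symm
  | .branch l r oi oh, .R :: k, h => by
    simp only [insNode, modelizeNodeAux, List.map_append, map_fst_prependAll] at h ⊢
    have hr : PrefixFreeList ((k :: (modelizeNodeAux r).map Prod.fst).map ([.R] ++ ·)) :=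
      h.sublist ((List.sublist_append_right _ _).cons_cons _)
    rw [modelizeNodeAux_insNode r k ((prefixFreeList_map_append_left _).mp hr)]
    exact (insertSorted_R k _ _ _).symm
  | .extender s t oi, k, h => by
    simp only [modelizeNodeAux, map_fst_prependAll] at h ⊢
    rcases List.prefix_or_diverge k s with
      ⟨x, rfl⟩ | ⟨e, y, rfl⟩ | ⟨c, d, x, e, y, hde, rfl, rfl⟩
    · have ht : PrefixFreeList ((x :: (modelizeNodeAux t).map Prod.fst).map (s ++ ·)) := h
      rw [insNode_extender_append, modelizeNodeAux,
        modelizeNodeAux_insNode t x ((prefixFreeList_map_append_left _).mp ht),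
        insertSorted_prependAll]
    · obtain ⟨a, ha⟩ := List.exists_mem_of_ne_nil _ (modelizeNodeAux_ne_nil t)
      refine absurd ?_ ((List.pairwise_cons.mp h).1 _
        (List.mem_map_of_mem (List.mem_map_of_mem ha))).1
      simp
    · rw [insNode_extender_fork v oi t c hde]
      exact modelizeNodeAux_fork v oi c d x y t hde

end InsNode

def insBud (v : α) (k : Key) : PNode α ι η → PNode α ι η
  | .bud none oi oh => .bud (some (.extender k (.leaf v oi oh) oi)) oi oh
  | .bud (some t) oi oh => .bud (some (insNode v t k)) oi oh
  | n => n

section InsBud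

variable (v : α) {k : Key} {n : PNode α ι η}

theorem isBud_insBud (hn : n.isBud) : (insBud v k n).isBud := by
  rcases n with _ | _ | _ | ⟨_ | _, _, _⟩ <;> trivial

theorem goodKeyList_modelizeNode (hn : n.isBud) :
    GoodKeyList ((modelizeNode n).map Prod.fst) := by
  rcases n with _ | _ | _ | ⟨_ | t, _, _⟩
  iterate 3 exact hn.elim
  · exact ⟨List.Pairwise.nil, List.Pairwise.nil⟩
  · exact goodKeyList_modelizeNodeAux t

theorem modelizeNode_insBud (hn : n.isBud)
    (h : PrefixFreeList (k :: (modelizeNode n).map Prod.fst)) :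
    modelizeNode (insBud v k n) = insertSorted k (.value v) (modelizeNode n) := by
  rcases n with _ | _ | _ | ⟨_ | t, _, _⟩
  iterate 3 exact hn.elim
  · simp [insBud, modelizeNode, modelizeNodeAux, prependAll, insertSorted]
  · exact modelizeNodeAux_insNode v t k h

theorem inv_insBud (hk : k ≠ []) (hn : n.isBud) (h : n.inv) : (insBud v k n).inv := by
  rcases n with _ | _ | _ | ⟨_ | t, oi, oh⟩
  iterate 3 exact hn.elim
  · exact ⟨id, id, id, h, id, ⟨id, hk, h, id, trivial⟩⟩
  · obtain ⟨hnb, hnl, hh, hoi, hi, ht⟩ := h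
    exact ⟨(not_isBud_and_not_isLeaf_insNode v t k ⟨hnb, hnl⟩).1,
      (not_isBud_and_not_isLeaf_insNode v t k ⟨hnb, hnl⟩).2,
      fun h => hashed_insNode v t k (hh h), hoi, fun h => indexed_insNode v t k (hi h),
      inv_insNode v t k ht⟩

theorem ZPath.connect_bud {p : ZPath α ι η} {oc : Option (PNode α ι η)} {oi : Option ι}
    {oh : Option η} (h : p.connect (.bud oc oi oh)) (oc' : Option (PNode α ι η)) :
    p.connect (.bud oc' oi oh) := by
  cases p
  exacts [trivial, h, h, ⟨h.1, h.2.1, id⟩, (h.2.2.1 trivial).elim]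

theorem zipperInv_insBud {p : ZPath α ι η} (hk : k ≠ []) (hn : n.isBud) (h : zipperInv p n) :
    zipperInv p (insBud v k n) := by
  obtain ⟨hn', hp, hc⟩ := h
  refine ⟨inv_insBud v hk hn hn', hp, ?_⟩
  rcases n with _ | _ | _ | ⟨_ | _, _, _⟩
  iterate 3 exact hn.elim
  all_goals exact ZPath.connect_bud hc _

end InsBud

def budzipperInsert (z : ZPath α ι η × PNode α ι η) (k : Key) (v : α) :
    Option (ZPath α ι η × PNode α ι η) :=
  if PrefixFreeList (k :: (modelizeNode z.2).map Prod.fst) then some (z.1, insBud v k z.2)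
  else none

/-- there is an `insert` function on budzippers satisfying the
functional requirements: on a budzipper satisfying the zipper invariants and a
nonempty key `k`, if `k` is fresh among the keys of the node's model and keeps
them prefix-free, it returns a budzipper satisfying the zipper invariants, with
the same path model, whose node model is the extension of the old one by
`{k ↦ Value v}`; otherwise it returns `none`. -/
theorem stmt13 {α ι η : Type} [Inhabited α] :
    ∃ ins : ZPath α ι η × PNode α ι η → Key → α →
        Option (ZPath α ι η × PNode α ι η),
      ∀ (p : ZPath α ι η) (n : PNode α ι η), n.isBud → zipperInv p n →
        ∀ k : Key, k ≠ [] → ∀ v : α,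
          ((k ∉ (modelizeNode n).map Prod.fst ∧
              PrefixFreeSet
                (insert k {x : Key | x ∈ (modelizeNode n).map Prod.fst})) →
            ∃ (p' : ZPath α ι η) (n' : PNode α ι η),
              ins (p, n) k v = some (p', n') ∧
              n'.isBud ∧ zipperInv p' n' ∧
              modelizePath p' = modelizePath p ∧
              GoodKeyList ((modelizeNode n').map Prod.fst) ∧
              lookupA (modelizeNode n') k = some (NestedValue.value v) ∧
              (∀ k' : Key, k' ≠ k →
                lookupA (modelizeNode n') k' = lookupA (modelizeNode n) k')) ∧
          (¬ (k ∉ (modelizeNode n).map Prod.fst ∧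
              PrefixFreeSet
                (insert k {x : Key | x ∈ (modelizeNode n).map Prod.fst})) →
            ins (p, n) k v = none) := by
  refine ⟨budzipperInsert, ?_⟩
  intro p n hn hz k hk v
  have hcond := prefixFreeList_cons_iff (goodKeyList_modelizeNode hn).1 k
  refine ⟨fun hfree => ?_, fun hfree => if_neg (hcond.not.mpr hfree)⟩
  have hpf := hcond.mpr hfree
  have hmodel := modelizeNode_insBud v hn hpf
  refine ⟨p, insBud v k n, if_pos hpf, isBud_insBud v hn, zipperInv_insBud v hk hn hz, rfl,
    goodKeyList_modelizeNode (isBud_insBud v hn), ?_, fun k' hk' => ?_⟩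
  · rw [hmodel]
    exact lookupA_orderedInsert_self hfree.1
  · rw [hmodel]
    exact lookupA_orderedInsert_of_ne _ _ hk'
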